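/- arXiv:1711.05123 — 11 statements merged into one kernel-verified Lean document; each statement's English description precedes it below -/
import Mathlib

section
/- Let H : U ⇉ U on a Hilbert space U with H⁻¹(0) nonempty, and let τ > 0, ξ ≥ 0. Suppose that for all u in U and all w ∈ H(u), inf_{u* ∈ H⁻¹(0)} ( 2τ⟨w, u-u*⟩ + ‖u-u*‖² ) ≥ (1+ξ) dist²(u, H⁻¹(0)). Then the iterates of the proximal point method, defined by 0 ∈ H(u^{i+1}) + τ⁻¹(u^{i+1} - uⁱ) (assumed solvable at each step), satisfy dist²(u^N, H⁻¹(0)) ≤ (1+ξ)^{-N} dist²(u⁰, H⁻¹(0)) for all N ≥ 1. -/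
open scoped RealInnerProductSpace

/-- Linear convergence of the basic proximal point method under
`(ξI, 2τI, (1+ξ)I)`-partial strong submonotonicity (with global neighbourhood). -/
theorem prox_point_linear_from_submonotonicity
    {U : Type*} [NormedAddCommGroup U] [InnerProductSpace ℝ U]
    (H : U → Set U) (S : Set U) (hS : S = {v | (0:U) ∈ H v}) (hSne : S.Nonempty)
    (τ ξ : ℝ) (hτ : 0 < τ) (hξ : 0 ≤ ξ)
    (hsub : ∀ u : U, ∀ w ∈ H u, ∀ us ∈ S,
      2 * τ * ⟪w, u - us⟫ + ‖u - us‖^2 ≥ (1 + ξ) * (Metric.infDist u S)^2)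
    (u : ℕ → U)
    (hiter : ∀ i : ℕ, ∃ w ∈ H (u (i+1)), w + τ⁻¹ • (u (i+1) - u i) = 0) :
    ∀ N : ℕ, 1 ≤ N →
      (Metric.infDist (u N) S)^2 ≤ ((1 + ξ)^N)⁻¹ * (Metric.infDist (u 0) S)^2 := by
  have hpos : (0:ℝ) < 1 + ξ := by linarith
  -- one-step estimate
  have step : ∀ i : ℕ,
      (1 + ξ) * (Metric.infDist (u (i+1)) S)^2 ≤ (Metric.infDist (u i) S)^2 := by
    intro i
    obtain ⟨w, hwH, hw⟩ := hiter i
    have hwval : w = -(τ⁻¹ • (u (i+1) - u i)) := by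
      have h := hw
      linear_combination (norm := abel) h
    set d := Metric.infDist (u (i+1)) S with hd
    have hdnn : 0 ≤ d := Metric.infDist_nonneg
    have key : ∀ us ∈ S, (1 + ξ) * d^2 ≤ ‖u i - us‖^2 := by
      intro us hus
      have h1 := hsub (u (i+1)) w hwH us hus
      have hinner : 2 * τ * ⟪w, u (i+1) - us⟫
          = -2 * ⟪u (i+1) - u i, u (i+1) - us⟫ := by
        rw [hwval, inner_neg_left, real_inner_smul_left]
        field_simp
      have hexp : ‖u i - us‖^2 = ‖u (i+1) - us‖^2
          - 2 * ⟪u (i+1) - us, u (i+1) - u i⟫ + ‖u (i+1) - u i‖^2 := by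
        have h2 : u i - us = (u (i+1) - us) - (u (i+1) - u i) := by abel
        rw [h2, norm_sub_sq_real]
      have hsymm : ⟪u (i+1) - us, u (i+1) - u i⟫ = ⟪u (i+1) - u i, u (i+1) - us⟫ :=
        real_inner_comm _ _
      nlinarith [sq_nonneg ‖u (i+1) - u i‖]
    have hle : Real.sqrt (1 + ξ) * d ≤ Metric.infDist (u i) S := by
      by_contra h
      push_neg at h
      obtain ⟨us, hus, hlt⟩ := (Metric.infDist_lt_iff hSne).mp h
      have hk := key us hus
      have hdist : dist (u i) us = ‖u i - us‖ := by
        rw [dist_eq_norm]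
      have hsq : (dist (u i) us)^2 < (Real.sqrt (1 + ξ) * d)^2 := by
        apply pow_lt_pow_left₀ hlt dist_nonneg
        norm_num
      rw [mul_pow, Real.sq_sqrt hpos.le, hdist] at hsq
      linarith
    have := mul_le_mul hle hle (by positivity) Metric.infDist_nonneg
    have hs2 : Real.sqrt (1 + ξ) * Real.sqrt (1 + ξ) = 1 + ξ := Real.mul_self_sqrt hpos.le
    calc (1 + ξ) * d^2 = (Real.sqrt (1 + ξ) * d) * (Real.sqrt (1 + ξ) * d) := by
          rw [mul_mul_mul_comm, hs2]; ring
      _ ≤ Metric.infDist (u i) S * Metric.infDist (u i) S := this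
      _ = (Metric.infDist (u i) S)^2 := by ring
  -- induction
  have main : ∀ N : ℕ,
      (Metric.infDist (u N) S)^2 ≤ ((1 + ξ)^N)⁻¹ * (Metric.infDist (u 0) S)^2 := by
    intro N
    induction N with
    | zero => simp
    | succ n ih =>
        have hstep := step n
        have h1 : (Metric.infDist (u (n+1)) S)^2 ≤ (1 + ξ)⁻¹ * (Metric.infDist (u n) S)^2 := by
          rw [le_inv_mul_iff₀ hpos]
          exact hstep
        calc (Metric.infDist (u (n+1)) S)^2
            ≤ (1 + ξ)⁻¹ * (Metric.infDist (u n) S)^2 := h1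
          _ ≤ (1 + ξ)⁻¹ * (((1 + ξ)^n)⁻¹ * (Metric.infDist (u 0) S)^2) := by
              apply mul_le_mul_of_nonneg_left ih (by positivity)
          _ = ((1 + ξ)^(n+1))⁻¹ * (Metric.infDist (u 0) S)^2 := by
              field_simp
              ring_nf
    
  intro N _
  exact main N
end

section
/- Let H : U ⇉ U on a Hilbert space U with H⁻¹(0) nonempty and closed, and let τ > 0, π ≥ 0, δ ∈ [0,1]. Suppose (a) ⟨w, u - u*⟩ ≥ 0 for all u ∈ U, w ∈ H(u), u* ∈ H⁻¹(0); and (b) δτ² dist²(0, H(u)) ≥ π dist²(u, H⁻¹(0)) for all u ∈ U. Then the iterates of the proximal point method 0 ∈ H(u^{i+1}) + τ⁻¹(u^{i+1}-uⁱ) satisfy dist²(u^N, H⁻¹(0)) ≤ (1+π)^{-N} dist²(u⁰, H⁻¹(0)). -/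
open scoped RealInnerProductSpace

/-- Linear convergence of the basic proximal point method under partial subregularity
together with monotonicity with respect to zeros. -/
theorem prox_point_linear_from_subregularity
    {U : Type*} [NormedAddCommGroup U] [InnerProductSpace ℝ U]
    (H : U → Set U) (S : Set U) (hS : S = {v | (0:U) ∈ H v})
    (hSne : S.Nonempty) (hScl : IsClosed S)
    (τ π δ : ℝ) (hτ : 0 < τ) (hπ : 0 ≤ π) (hδ0 : 0 ≤ δ) (hδ1 : δ ≤ 1)
    (ha : ∀ u : U, ∀ w ∈ H u, ∀ us ∈ S, ⟪w, u - us⟫ ≥ 0)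
    (hb : ∀ u : U, δ * τ^2 * sInf ((fun w => ‖w‖^2) '' (H u))
      ≥ π * (Metric.infDist u S)^2)
    (u : ℕ → U)
    (hiter : ∀ i : ℕ, ∃ w ∈ H (u (i+1)), w + τ⁻¹ • (u (i+1) - u i) = 0) :
    ∀ N : ℕ, 1 ≤ N →
      (Metric.infDist (u N) S)^2 ≤ ((1 + π)^N)⁻¹ * (Metric.infDist (u 0) S)^2 := by
  have h1π : (0:ℝ) < 1 + π := by linarith
  -- key one-step estimate
  have key : ∀ i : ℕ, (1 + π) * (Metric.infDist (u (i+1)) S)^2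
      ≤ (Metric.infDist (u i) S)^2 := by
    intro i
    obtain ⟨w, hwH, hw⟩ := hiter i
    have hw' : w = τ⁻¹ • (u i - u (i+1)) := by
      have h1 : w = -(τ⁻¹ • (u (i+1) - u i)) := eq_neg_of_add_eq_zero_left hw
      rw [h1, ← smul_neg, neg_sub]
    have hpt : ∀ us ∈ S, (1 + π) * (Metric.infDist (u (i+1)) S)^2 ≤ ‖u i - us‖^2 := by
      intro us hus
      have hmono := ha (u (i+1)) w hwH us hus
      have hτ' : (0:ℝ) < τ⁻¹ := inv_pos.2 hτ
      have hin : 0 ≤ ⟪u i - u (i+1), u (i+1) - us⟫ := by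
        rw [hw', real_inner_smul_left] at hmono
        nlinarith [hmono]
      have hexp : ‖u i - us‖^2 = ‖u i - u (i+1)‖^2
          + 2 * ⟪u i - u (i+1), u (i+1) - us⟫ + ‖u (i+1) - us‖^2 := by
        have h2 : u i - us = (u i - u (i+1)) + (u (i+1) - us) := by abel
        rw [h2, norm_add_sq_real]
      have hdist : Metric.infDist (u (i+1)) S ≤ ‖u (i+1) - us‖ := by
        have := Metric.infDist_le_dist_of_mem (x := u (i+1)) hus
        rwa [dist_eq_norm] at this
      have hdist2 : (Metric.infDist (u (i+1)) S)^2 ≤ ‖u (i+1) - us‖^2 :=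
        pow_le_pow_left₀ Metric.infDist_nonneg hdist 2
      have hsInf : sInf ((fun w => ‖w‖^2) '' (H (u (i+1)))) ≤ ‖w‖^2 := by
        apply csInf_le
        · exact ⟨0, by rintro x ⟨y, _, rfl⟩; positivity⟩
        · exact ⟨w, hwH, rfl⟩
      have hb' := hb (u (i+1))
      have hwnorm : ‖w‖^2 = τ⁻¹^2 * ‖u i - u (i+1)‖^2 := by
        rw [hw', norm_smul, Real.norm_eq_abs, abs_of_pos hτ', mul_pow]
      have hττ : τ * τ⁻¹ = 1 := mul_inv_cancel₀ (ne_of_gt hτ)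
      have hπd : π * (Metric.infDist (u (i+1)) S)^2 ≤ ‖u i - u (i+1)‖^2 := by
        have h3 : δ * τ^2 * sInf ((fun w => ‖w‖^2) '' (H (u (i+1))))
            ≤ δ * τ^2 * ‖w‖^2 := by
          apply mul_le_mul_of_nonneg_left hsInf
          positivity
        have h4 : δ * τ^2 * ‖w‖^2 = δ * ‖u i - u (i+1)‖^2 := by
          rw [hwnorm]; linear_combination δ * ‖u i - u (i+1)‖^2 * (τ * τ⁻¹ + 1) * hττ
        have h5 : δ * ‖u i - u (i+1)‖^2 ≤ ‖u i - u (i+1)‖^2 := by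
          nlinarith [sq_nonneg ‖u i - u (i+1)‖]
        linarith [hb']
      nlinarith [hin, hdist2, hπd, hexp]
    by_contra hcon
    push_neg at hcon
    have hDnn : 0 ≤ (1 + π) * (Metric.infDist (u (i+1)) S)^2 := by positivity
    have hlt : Metric.infDist (u i) S
        < Real.sqrt ((1 + π) * (Metric.infDist (u (i+1)) S)^2) :=
      (Real.lt_sqrt Metric.infDist_nonneg).2 hcon
    obtain ⟨us, hus, hdus⟩ := (Metric.infDist_lt_iff hSne).1 hlt
    have : ‖u i - us‖^2 < (1 + π) * (Metric.infDist (u (i+1)) S)^2 := by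
      have h6 : ‖u i - us‖ < Real.sqrt ((1 + π) * (Metric.infDist (u (i+1)) S)^2) := by
        rwa [dist_eq_norm] at hdus
      calc ‖u i - us‖^2 < (Real.sqrt ((1 + π) * (Metric.infDist (u (i+1)) S)^2))^2 := by
            apply pow_lt_pow_left₀ h6 (norm_nonneg _); norm_num
        _ = (1 + π) * (Metric.infDist (u (i+1)) S)^2 := Real.sq_sqrt hDnn
    exact absurd (hpt us hus) (not_le.2 this)
  -- conclude by induction
  have main : ∀ N : ℕ, (Metric.infDist (u N) S)^2
      ≤ ((1 + π)^N)⁻¹ * (Metric.infDist (u 0) S)^2 := by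
    intro N
    induction N with
    | zero => simp
    | succ n ih =>
      have hk := key n
      have hpow : (0:ℝ) < (1 + π)^n := pow_pos h1π n
      have hstep : (Metric.infDist (u (n+1)) S)^2
          ≤ (1 + π)⁻¹ * (Metric.infDist (u n) S)^2 := by
        rw [le_inv_mul_iff₀ h1π]; exact hk
      calc (Metric.infDist (u (n+1)) S)^2
          ≤ (1 + π)⁻¹ * (Metric.infDist (u n) S)^2 := hstep
        _ ≤ (1 + π)⁻¹ * (((1 + π)^n)⁻¹ * (Metric.infDist (u 0) S)^2) := by
            apply mul_le_mul_of_nonneg_left ih (by positivity)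
        _ = ((1 + π)^(n+1))⁻¹ * (Metric.infDist (u 0) S)^2 := by
            rw [pow_succ (1 + π) n, mul_inv]; ring
  exact fun N _ => main N
end

section
/- Let T : U ⇉ U, and let Ξ, N, M ∈ L(U;U) with M ≥ Ξ ≥ 0 (positive semidefinite orderings). Suppose T is (N, Ξ)-strongly submonotone at (u̅, w̅) ∈ graph T, i.e., there is a neighbourhood 𝒰 of u̅ such that inf_{u* ∈ T⁻¹(w̅)} ⟨N(w - w̅), u - u*⟩ ≥ dist²_Ξ(u, T⁻¹(w̅)) for all u ∈ 𝒰 and w ∈ T(u). Suppose moreover that every point in a neighbourhood of u̅ has a common projection onto T⁻¹(w̅) with respect to the seminorms ‖·‖_Ξ and ‖·‖_{M-Ξ}. Then T is (Ξ, N, M)-partially strongly submonotone at (u̅, w̅): inf_{u* ∈ T⁻¹(w̅)} ( ⟨N(w-w̅), u-u*⟩ + ‖u-u*‖²_{M-Ξ} ) ≥ dist²_M(u, T⁻¹(w̅)) on a neighbourhood of u̅. -/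
open scoped RealInnerProductSpace

/-- Strong submonotonicity together with a common-projection condition implies
partial strong submonotonicity (Proposition 4.2). -/
theorem strong_submonotone_to_partial
    {U : Type*} [NormedAddCommGroup U] [InnerProductSpace ℝ U]
    (T : U → Set U) (Ξ N M : U →L[ℝ] U) (ub wb : U) (hgraph : wb ∈ T ub)
    (hΞpos : ∀ x : U, 0 ≤ ⟪Ξ x, x⟫) (hMΞ : ∀ x : U, 0 ≤ ⟪(M - Ξ) x, x⟫)
    (S : Set U) (hS : S = {v | wb ∈ T v})
    (hsub : ∃ 𝒰 ∈ nhds ub, ∀ u ∈ 𝒰, ∀ w ∈ T u, ∀ us ∈ S,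
      ⟪N (w - wb), u - us⟫ ≥ sInf ((fun a => ⟪Ξ (u - a), u - a⟫) '' S))
    (hproj : ∃ 𝒰' ∈ nhds ub, ∀ u ∈ 𝒰', ∃ us ∈ S,
      (∀ v ∈ S, ⟪Ξ (u - us), u - us⟫ ≤ ⟪Ξ (u - v), u - v⟫) ∧
      (∀ v ∈ S, ⟪(M - Ξ) (u - us), u - us⟫ ≤ ⟪(M - Ξ) (u - v), u - v⟫)) :
    ∃ 𝒰 ∈ nhds ub, ∀ u ∈ 𝒰, ∀ w ∈ T u, ∀ us ∈ S,
      ⟪N (w - wb), u - us⟫ + ⟪(M - Ξ) (u - us), u - us⟫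
        ≥ sInf ((fun a => ⟪M (u - a), u - a⟫) '' S) := by
  obtain ⟨𝒰, h𝒰, hsub⟩ := hsub
  obtain ⟨𝒰', h𝒰', hproj⟩ := hproj
  have hSne : ub ∈ S := by rw [hS]; exact hgraph
  have hsplit : ∀ x : U, ⟪M x, x⟫ = ⟪Ξ x, x⟫ + ⟪(M - Ξ) x, x⟫ := by
    intro x
    simp [ContinuousLinearMap.sub_apply, inner_sub_left]
  refine ⟨𝒰 ∩ 𝒰', Filter.inter_mem h𝒰 h𝒰', ?_⟩
  rintro u ⟨hu1, hu2⟩ w hw us hus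
  obtain ⟨u', hu'S, hΞmin, hMΞmin⟩ := hproj u hu2
  have h1 : ⟪N (w - wb), u - us⟫ ≥ ⟪Ξ (u - u'), u - u'⟫ := by
    refine le_trans ?_ (hsub u hu1 w hw us hus)
    apply le_csInf ((Set.nonempty_of_mem hSne).image _)
    rintro b ⟨a, haS, rfl⟩
    exact hΞmin a haS
  have h2 : ⟪(M - Ξ) (u - us), u - us⟫ ≥ ⟪(M - Ξ) (u - u'), u - u'⟫ :=
    hMΞmin us hus
  have h3 : sInf ((fun a => ⟪M (u - a), u - a⟫) '' S) ≤ ⟪M (u - u'), u - u'⟫ := by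
    refine csInf_le ⟨0, ?_⟩ ⟨u', hu'S, rfl⟩
    rintro b ⟨a, haS, rfl⟩
    dsimp only
    rw [hsplit]
    exact add_nonneg (hΞpos _) (hMΞ _)
  calc sInf ((fun a => ⟪M (u - a), u - a⟫) '' S)
      ≤ ⟪M (u - u'), u - u'⟫ := h3
    _ = ⟪Ξ (u - u'), u - u'⟫ + ⟪(M - Ξ) (u - u'), u - u'⟫ := hsplit _
    _ ≤ ⟪N (w - wb), u - us⟫ + ⟪(M - Ξ) (u - us), u - us⟫ := add_le_add h1 h2
end

section
/- Let C = {-1, 1} ⊂ ℝ and define T_C(u) := u − P_C(u) where P_C is the (set-valued) Euclidean projection onto C. Then for every γ ∈ (0,1), T_C is (γ, 1, 1)-partially strongly submonotone at (1, 0): there is a neighbourhood 𝒰 of 1 such that for all u ∈ 𝒰 and all w ∈ T_C(u), inf_{u* ∈ {-1,1}} ( w(u-u*) + (1-γ)(u-u*)² ) ≥ dist²(u, {-1,1}). However, this fails for γ = 1: for every neighbourhood 𝒰 of 1 there exist u ∈ 𝒰 and w ∈ T_C(u) with inf_{u* ∈ {-1,1}} w(u-u*) < dist²(u, {-1,1}).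 -/
/-- Example 5.1: for `C = {-1,1}`, the map `T_C(u) = u - P_C(u)` is
`(γI, I, I)`-partially strongly submonotone at `(1, 0)` for `γ ∈ (0,1)`,
but not for `γ = 1`. -/
theorem twoPoint_partial_submonotone
    (C : Set ℝ) (hC : C = {-1, 1})
    (PC : ℝ → Set ℝ) (hPC : ∀ u, PC u = {c ∈ C | ∀ c' ∈ C, |u - c| ≤ |u - c'|})
    (TC : ℝ → Set ℝ) (hTC : ∀ u, TC u = (fun c => u - c) '' PC u) :
    (∀ γ : ℝ, 0 < γ → γ < 1 →
      ∃ 𝒰 ∈ nhds (1:ℝ), ∀ u ∈ 𝒰, ∀ w ∈ TC u, ∀ us ∈ C,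
        w * (u - us) + (1 - γ) * (u - us)^2 ≥ (Metric.infDist u C)^2)
    ∧ (∀ 𝒰 ∈ nhds (1:ℝ), ∃ u ∈ 𝒰, ∃ w ∈ TC u, ∃ us ∈ C,
        w * (u - us) < (Metric.infDist u C)^2) := by
  have h1C : (1:ℝ) ∈ C := by rw [hC]; simp
  have hinf : ∀ u : ℝ, (Metric.infDist u C)^2 ≤ (u - 1)^2 := by
    intro u
    have h1 : Metric.infDist u C ≤ dist u 1 := Metric.infDist_le_dist_of_mem h1C
    have h2 : 0 ≤ Metric.infDist u C := Metric.infDist_nonneg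
    have : dist u 1 = |u - 1| := Real.dist_eq u 1
    nlinarith [abs_nonneg (u-1), sq_abs (u-1)]
  constructor
  · intro γ hγ0 hγ1
    have hδ : (0:ℝ) < min (1/2) (1-γ) := by
      apply lt_min <;> linarith
    refine ⟨Metric.ball 1 (min (1/2) (1-γ)), Metric.ball_mem_nhds _ hδ, ?_⟩
    intro u hu w hw us hus
    rw [Metric.mem_ball, Real.dist_eq] at hu
    have hu1 : |u - 1| < 1/2 := lt_of_lt_of_le hu (min_le_left _ _)
    have hu2 : |u - 1| < 1 - γ := lt_of_lt_of_le hu (min_le_right _ _)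
    have hub1 := abs_lt.mp hu1
    have hub2 := abs_lt.mp hu2
    -- determine w = u - 1
    rw [hTC] at hw
    obtain ⟨c, hc, hcw⟩ := hw
    rw [hPC] at hc
    obtain ⟨hcC, hcmin⟩ := hc
    have hc1 : c = 1 := by
      rw [hC] at hcC
      rcases hcC with h | h
      · exfalso
        have := hcmin 1 h1C
        rw [h] at this
        have ha : |u - -1| = u + 1 := by
          rw [abs_of_pos]; ring_nf; linarith
        have hb : |u - 1| < u + 1 := by
          cases abs_cases (u - 1) with
          | inl h' => rw [h'.1]; linarith
          | inr h' => rw [h'.1]; linarith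
        rw [ha] at this; linarith
      · simpa using h
    subst hc1
    have hw1 : w = u - 1 := by simpa using hcw.symm
    subst hw1
    rw [hC] at hus
    have hle := hinf u
    rcases hus with h | h
    · -- us = -1
      subst h
      have hquad : (0:ℝ) < (u + 1)^2 - 9/4 := by nlinarith
      have hpos : (0:ℝ) < (1 - γ) * ((u + 1)^2 - 9/4) :=
        mul_pos (by linarith) hquad
      nlinarith
    · simp only [Set.mem_singleton_iff] at h
      subst h
      nlinarith [sq_nonneg (u-1), mul_nonneg (le_of_lt (show (0:ℝ) < 1-γ by linarith)) (sq_nonneg (u-1))]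
  · intro 𝒰 h𝒰
    obtain ⟨ε, hε, hball⟩ := Metric.mem_nhds_iff.mp h𝒰
    set u : ℝ := 1 - min ε 1 / 2 with hu_def
    have hm : 0 < min ε 1 := lt_min hε one_pos
    have hm1 : min ε 1 ≤ 1 := min_le_right _ _
    have hu0 : (0:ℝ) < u := by rw [hu_def]; linarith
    have hu1 : u < 1 := by rw [hu_def]; linarith
    refine ⟨u, hball ?_, u - 1, ?_, -1, by rw [hC]; simp, ?_⟩
    · rw [Metric.mem_ball, Real.dist_eq]
      have : |u - 1| = min ε 1 / 2 := by
        rw [hu_def, abs_of_nonpos] <;> [ring_nf; linarith]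
      rw [this]
      have := min_le_left ε 1
      linarith
    · rw [hTC]
      refine ⟨1, ?_, rfl⟩
      rw [hPC]
      refine ⟨h1C, ?_⟩
      intro c' hc'
      rw [hC] at hc'
      rcases hc' with h | h
      · subst h
        rw [abs_of_nonpos (by linarith), abs_of_pos (by linarith)]
        linarith
      · simp only [Set.mem_singleton_iff] at h
        subst h
        exact le_refl _
    · have h1 : (u - 1) * (u - -1) < 0 := by nlinarith
      have h2 : (0:ℝ) ≤ (Metric.infDist u C)^2 := sq_nonneg _
      linarith
end

section
/- Let C = {-1, 1} ⊂ ℝ and T_C(u) := u − P_C(u). Then for every γ > 0, T_C is NOT (I, γI)-strongly submonotone at (1, 0): for every neighbourhood 𝒰 of 1 there exist u ∈ 𝒰 and w ∈ T_C(u) such that inf_{u* ∈ {-1,1}} w·(u-u*) < γ dist²(u, {-1,1}). -/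
/-- Example 5.2: for `C = {-1,1}`, the map `T_C(u) = u - P_C(u)` is not
`(I, γI)`-strongly submonotone at `(1, 0)` for any `γ > 0`. -/
theorem twoPoint_not_strongly_submonotone
    (C : Set ℝ) (hC : C = {-1, 1})
    (PC : ℝ → Set ℝ) (hPC : ∀ u, PC u = {c ∈ C | ∀ c' ∈ C, |u - c| ≤ |u - c'|})
    (TC : ℝ → Set ℝ) (hTC : ∀ u, TC u = (fun c => u - c) '' PC u) :
    ∀ γ : ℝ, 0 < γ → ∀ 𝒰 ∈ nhds (1:ℝ), ∃ u ∈ 𝒰, ∃ w ∈ TC u, ∃ us ∈ C,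
      w * (u - us) < γ * (Metric.infDist u C)^2 := by
  intro γ hγ 𝒰 h𝒰
  obtain ⟨ε, hε, hball⟩ := Metric.mem_nhds_iff.mp h𝒰
  set δ : ℝ := min ε 1 / 2 with hδdef
  have hδpos : 0 < δ := by positivity
  have hδε : δ < ε := by
    have : min ε 1 ≤ ε := min_le_left _ _
    simp only [hδdef]; linarith
  have hδ1 : δ < 1 := by
    have : min ε 1 ≤ 1 := min_le_right _ _
    simp only [hδdef]; linarith
  set u : ℝ := 1 - δ with hu
  have huU : u ∈ 𝒰 := by
    apply hball
    simp only [Metric.mem_ball, hu, Real.dist_eq]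
    rw [show (1 : ℝ) - δ - 1 = -δ by ring, abs_neg, abs_of_pos hδpos]
    exact hδε
  refine ⟨u, huU, u - 1, ?_, -1, by simp [hC], ?_⟩
  · rw [hTC]
    refine ⟨1, ?_, rfl⟩
    rw [hPC]
    refine ⟨by simp [hC], ?_⟩
    intro c' hc'
    rw [hC] at hc'
    rcases hc' with h | h
    · subst h
      rw [hu, show (1:ℝ) - δ - 1 = -δ by ring, show (1:ℝ) - δ - -1 = 2 - δ by ring,
        abs_neg, abs_of_pos hδpos, abs_of_pos (by linarith)]
      linarith
    · rw [h]
  · have hlhs : (u - 1) * (u - (-1)) < 0 := by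
      have h1 : u - 1 < 0 := by rw [hu]; linarith
      have h2 : 0 < u - (-1) := by rw [hu]; linarith
      exact mul_neg_of_neg_of_pos h1 h2
    have hrhs : 0 ≤ γ * (Metric.infDist u C)^2 := by positivity
    linarith
end

section
/- Let C := {0} ∪ {2^{-k} : k ∈ ℕ} ⊂ ℝ and T_C(u) := u − P_C(u). Then for every γ ≥ 0, T_C fails to be (γ, 1, 1)-partially strongly submonotone at (0, 0): for every neighbourhood 𝒰 of 0 there exist u ∈ 𝒰, u** ∈ P_C(u), and u* ∈ C with (u - u**)(u - u*) + (1-γ)(u-u*)² < dist²(u, C). In particular, one may take u = (2^{-k} + 2^{-k+1})/2 for large k, u** = 2^{-k}, and u* = 2^{-k+1}. -/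
/-- Example 5.3: for `C = {0} ∪ {2^{-k} : k ∈ ℕ}`, the map `T_C(u) = u - P_C(u)`
fails to be `(γI, I, I)`-partially strongly submonotone at `(0, 0)` for every `γ ≥ 0`. -/
theorem dyadic_failure_partial_submonotone
    (C : Set ℝ) (hC : C = insert 0 {x : ℝ | ∃ k : ℕ, x = ((2:ℝ)^k)⁻¹})
    (PC : ℝ → Set ℝ) (hPC : ∀ u, PC u = {c ∈ C | ∀ c' ∈ C, |u - c| ≤ |u - c'|}) :
    ∀ γ : ℝ, 0 ≤ γ → ∀ 𝒰 ∈ nhds (0:ℝ), ∃ u ∈ 𝒰, ∃ uss ∈ PC u, ∃ us ∈ C,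
      (u - uss) * (u - us) + (1 - γ) * (u - us)^2 < (Metric.infDist u C)^2 := by
  intro γ hγ 𝒰 h𝒰
  obtain ⟨ε, hε, hball⟩ := Metric.mem_nhds_iff.mp h𝒰
  obtain ⟨k, hk⟩ : ∃ k : ℕ, ((2:ℝ)^k)⁻¹ < ε/3 := by
    obtain ⟨k, hk⟩ := exists_pow_lt_of_lt_one (by positivity : (0:ℝ) < ε/3)
      (by norm_num : (1:ℝ)/2 < 1)
    refine ⟨k, ?_⟩
    rwa [one_div, inv_pow] at hk
  set a : ℝ := ((2:ℝ)^(k+1))⁻¹ with ha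
  have ha0 : 0 < a := by positivity
  have ha2 : 2 * a = ((2:ℝ)^k)⁻¹ := by
    rw [ha, pow_succ]
    field_simp
  have haε : a < ε/3 := by
    have : a ≤ ((2:ℝ)^k)⁻¹ := by
      apply inv_anti₀ (by positivity)
      exact pow_le_pow_right₀ (by norm_num) (Nat.le_succ k)
    linarith
  set u : ℝ := 3/2 * a with hu
  -- every point of C is at distance ≥ a/2 from u
  have hdistC : ∀ c ∈ C, a/2 ≤ |u - c| := by
    intro c hc
    rw [hC] at hc
    rcases hc with rfl | ⟨j, rfl⟩
    · rw [sub_zero, abs_of_pos (by positivity)]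
      linarith
    · rcases le_or_gt j k with hj | hj
      · -- c = (2^j)⁻¹ ≥ 2a
        have h1 : ((2:ℝ)^k)⁻¹ ≤ ((2:ℝ)^j)⁻¹ :=
          inv_anti₀ (by positivity) (pow_le_pow_right₀ (by norm_num) hj)
        have : a/2 ≤ ((2:ℝ)^j)⁻¹ - u := by
          rw [hu]; rw [← ha2] at h1; linarith
        calc a/2 ≤ ((2:ℝ)^j)⁻¹ - u := this
          _ ≤ |u - ((2:ℝ)^j)⁻¹| := by rw [abs_sub_comm]; exact le_abs_self _
      · -- c = (2^j)⁻¹ ≤ a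
        have h1 : ((2:ℝ)^j)⁻¹ ≤ a :=
          inv_anti₀ (by positivity) (pow_le_pow_right₀ (by norm_num) hj)
        have : a/2 ≤ u - ((2:ℝ)^j)⁻¹ := by rw [hu]; linarith
        exact this.trans (le_abs_self _)
  have huC : u ∈ 𝒰 := by
    apply hball
    rw [Metric.mem_ball, Real.dist_eq, sub_zero, abs_of_pos (by positivity)]
    linarith
  refine ⟨u, huC, a, ?_, 2*a, ?_, ?_⟩
  · -- a ∈ PC u
    rw [hPC]
    refine ⟨?_, ?_⟩
    · rw [hC]; exact Set.mem_insert_iff.mpr (Or.inr ⟨k+1, rfl⟩)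
    · intro c' hc'
      have : |u - a| = a/2 := by
        rw [hu, abs_of_pos (by linarith)]; ring
      rw [this]
      exact hdistC c' hc'
  · rw [hC, ha2]; exact Set.mem_insert_iff.mpr (Or.inr ⟨k, rfl⟩)
  · -- the strict inequality
    have hne : C.Nonempty := by
      rw [hC]; exact ⟨0, Set.mem_insert _ _⟩
    have hlow : a/2 ≤ Metric.infDist u C := by
      by_contra h
      rw [not_le] at h
      obtain ⟨y, hy, hlt⟩ := (Metric.infDist_lt_iff hne).mp h
      rw [Real.dist_eq] at hlt
      exact absurd (hdistC y hy) (not_le.mpr hlt)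
    have h0 : 0 ≤ Metric.infDist u C := Metric.infDist_nonneg
    have hsq : (a/2)^2 ≤ (Metric.infDist u C)^2 := by nlinarith
    have hlhs : (u - a) * (u - 2*a) + (1 - γ) * (u - 2*a)^2 = -γ * (a/2)^2 := by
      rw [hu]; ring
    rw [hlhs]
    nlinarith [sq_nonneg a]
end

section
/- On ℝ², define T(u₁, u₂) := {(u₂, u₁)} if u₁ ≥ 0 and u₂ ≥ 0, and T(u) := ∅ otherwise. Then: (a) T is (I, I)-subregular at (0, 0) with global neighbourhood, i.e., ‖w‖² ≥ dist²(u, T⁻¹(0)) for all u and w ∈ T(u) (indeed T⁻¹(0) = {0} and ‖(u₂,u₁)‖² = ‖u‖²); (b) T is (I, I)-submonotone at (0,0) globally, i.e., ⟨w, u⟩ ≥ 0 for all w ∈ T(u); but (c) T is not (I, I)-strongly submonotone at (0,0): for every neighbourhood 𝒰 of 0 there exists u ∈ 𝒰 with w ∈ T(u) and ⟨w, u⟩ < ‖u‖². -/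
open scoped RealInnerProductSpace

/-- Example 5.6: `T(u₁,u₂) = {(u₂,u₁)}` on the nonnegative quadrant is
subregular and submonotone, but not strongly submonotone, at the origin. -/
theorem swap_map_subregular_not_strongly_submonotone
    (T : EuclideanSpace ℝ (Fin 2) → Set (EuclideanSpace ℝ (Fin 2)))
    (hT : ∀ u, T u = {w | 0 ≤ u 0 ∧ 0 ≤ u 1 ∧ w 0 = u 1 ∧ w 1 = u 0})
    (S : Set (EuclideanSpace ℝ (Fin 2)))
    (hS : S = {v | (0 : EuclideanSpace ℝ (Fin 2)) ∈ T v}) :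
    (∀ u, ∀ w ∈ T u, ‖w‖^2 ≥ (Metric.infDist u S)^2)
    ∧ (∀ u, ∀ w ∈ T u, ⟪w, u⟫ ≥ 0)
    ∧ (∀ 𝒰 ∈ nhds (0 : EuclideanSpace ℝ (Fin 2)), ∃ u ∈ 𝒰, ∃ w ∈ T u,
        ⟪w, u⟫ < ‖u‖^2) := by
  have hS0 : S = {(0 : EuclideanSpace ℝ (Fin 2))} := by
    ext v
    simp only [hS, hT, Set.mem_setOf_eq, Set.mem_singleton_iff]
    constructor
    · rintro ⟨h0, h1, e1, e0⟩
      ext i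
      fin_cases i
      · simpa using e0.symm
      · simpa using e1.symm
    · rintro rfl
      refine ⟨le_refl _, le_refl _, ?_, ?_⟩ <;> simp
  refine ⟨?_, ?_, ?_⟩
  · intro u w hw
    rw [hT u] at hw
    obtain ⟨h0, h1, e1, e0⟩ := hw
    have hnorm : ‖w‖ = ‖u‖ := by
      rw [EuclideanSpace.norm_eq, EuclideanSpace.norm_eq]
      congr 1
      rw [Fin.sum_univ_two, Fin.sum_univ_two, e0, e1]
      ring
    rw [hnorm, hS0, Metric.infDist_singleton, dist_zero_right]
  · intro u w hw
    rw [hT u] at hw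
    obtain ⟨h0, h1, e1, e0⟩ := hw
    have : ⟪w, u⟫ = u 1 * u 0 + u 0 * u 1 := by
      rw [PiLp.inner_apply, Fin.sum_univ_two, e0, e1]
      simp [RCLike.inner_apply, mul_comm]
    rw [this]
    positivity
  · intro 𝒰 h𝒰
    obtain ⟨ε, hε, hball⟩ := Metric.mem_nhds_iff.mp h𝒰
    set u : EuclideanSpace ℝ (Fin 2) := (WithLp.equiv 2 (Fin 2 → ℝ)).symm ![ε/2, 0] with hu
    have hu0 : u 0 = ε/2 := rfl
    have hu1 : u 1 = 0 := rfl
    have hnu : ‖u‖ = ε/2 := by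
      rw [EuclideanSpace.norm_eq, Fin.sum_univ_two, hu0, hu1]
      rw [show ‖ε/2‖^2 + ‖(0:ℝ)‖^2 = (ε/2)^2 by
        simp [Real.norm_eq_abs, abs_of_pos hε]]
      exact Real.sqrt_sq (by linarith)
    refine ⟨u, ?_, (WithLp.equiv 2 (Fin 2 → ℝ)).symm ![0, ε/2], ?_, ?_⟩
    · apply hball
      simp only [Metric.mem_ball, dist_zero_right, hnu]
      linarith
    · rw [hT u]
      exact ⟨by rw [hu0]; linarith, by rw [hu1], by rw [hu1]; rfl, by rw [hu0]; rfl⟩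
    · have hinner : ⟪(WithLp.equiv 2 (Fin 2 → ℝ)).symm ![0, ε/2], u⟫ = (0:ℝ) := by
        rw [PiLp.inner_apply, Fin.sum_univ_two, hu0, hu1]
        simp [RCLike.inner_apply]
      rw [hinner, hnu]
      positivity
end

section
/- Let γ ∈ (0,1) and define T : ℝ² ⇉ ℝ² by T(u₁,u₂) := {(γu₁, √((1-γ²)u₁² - u₂²))} when (1-γ²)u₁² ≥ u₂² and u₂ ≥ 0, and T(u) := ∅ otherwise. Let Ξ = diag(γ, 0). Then (a) T⁻¹(0) = {0}; (b) T is (Ξ, I, I)-partially strongly submonotone at (0,0) with global neighbourhood: ⟨w, u⟩ + ‖u‖²_{I-Ξ} ≥ ‖u‖² for all u ∈ dom T and w ∈ T(u); but (c) T is not (Ξ, I, I)-partially subregular at (0,0): for every neighbourhood of 0 there is u in it with w ∈ T(u) and ‖w‖² + ‖u‖²_{I-Ξ} < ‖u‖², e.g., any u with u₂² = (1-γ²)u₁², u₁ ≠ 0. -/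
/-!
On the domain, `⟪w, u⟫ = γ u₀² + u₁ √((1 - γ²) u₀² - u₁²) ≥ γ u₀²`, which is the submonotonicity
inequality. Subregularity fails because `‖w‖² = u₀² - u₁²` degenerates on the boundary ray
`u₁ = √(1 - γ²) u₀`: there the inequality to be violated reduces to `(1 - γ) u₀² < (1 - γ²) u₀²`,
which holds for `0 < γ < 1`, and the ray enters every neighbourhood of the origin.
-/

open scoped RealInnerProductSpace
open Filter Topology

namespace EuclideanSpace

lemma real_norm_sq_fin_two (u : EuclideanSpace ℝ (Fin 2)) : ‖u‖ ^ 2 = u 0 ^ 2 + u 1 ^ 2 := by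
  simp [real_norm_sq_eq, Fin.sum_univ_two]

lemma real_inner_fin_two (w u : EuclideanSpace ℝ (Fin 2)) : ⟪w, u⟫ = w 0 * u 0 + w 1 * u 1 := by
  simp [PiLp.inner_apply, Fin.sum_univ_two, mul_comm]

end EuclideanSpace

open EuclideanSpace

def coneMap (γ : ℝ) (u : EuclideanSpace ℝ (Fin 2)) : Set (EuclideanSpace ℝ (Fin 2)) :=
  {w | (u 1)^2 ≤ (1 - γ^2) * (u 0)^2 ∧ 0 ≤ u 1 ∧
    w 0 = γ * u 0 ∧ w 1 = Real.sqrt ((1 - γ^2) * (u 0)^2 - (u 1)^2)}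

namespace coneMap

variable {γ : ℝ} {u w : EuclideanSpace ℝ (Fin 2)}

lemma zero_mem_iff (hγ : γ ≠ 0) : 0 ∈ coneMap γ u ↔ u = 0 := by
  constructor
  · rintro ⟨hdom, -, hw0, -⟩
    have hu0 : u 0 = 0 := by simpa [hγ] using hw0.symm
    have hu1 : u 1 = 0 := by simpa [hu0] using hdom
    ext i
    fin_cases i <;> simp [hu0, hu1]
  · rintro rfl
    simp [coneMap]

lemma mul_sq_le_inner (hw : w ∈ coneMap γ u) : γ * u 0 ^ 2 ≤ ⟪w, u⟫ := by
  obtain ⟨-, hu1, hw0, hw1⟩ := hw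
  rw [real_inner_fin_two, hw0, hw1]
  nlinarith [mul_nonneg (Real.sqrt_nonneg ((1 - γ^2) * (u 0)^2 - (u 1)^2)) hu1]

lemma norm_sq (hw : w ∈ coneMap γ u) : ‖w‖ ^ 2 = u 0 ^ 2 - u 1 ^ 2 := by
  obtain ⟨hdom, -, hw0, hw1⟩ := hw
  rw [real_norm_sq_fin_two, hw0, hw1, Real.sq_sqrt (by linarith)]
  ring

lemma partial_strong_submonotone (hw : w ∈ coneMap γ u) :
    ⟪w, u⟫ + ((1 - γ) * (u 0)^2 + (u 1)^2) ≥ ‖u‖^2 := by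
  rw [real_norm_sq_fin_two]
  linarith [mul_sq_le_inner hw]

lemma not_partial_subregular_of_lt (hw : w ∈ coneMap γ u) (h : (1 - γ) * u 0 ^ 2 < u 1 ^ 2) :
    ‖w‖^2 + ((1 - γ) * (u 0)^2 + (u 1)^2) < ‖u‖^2 := by
  rw [norm_sq hw, real_norm_sq_fin_two]
  linarith

end coneMap

noncomputable def boundaryRay (γ t : ℝ) : EuclideanSpace ℝ (Fin 2) := !₂[t, √(1 - γ ^ 2) * t]

namespace boundaryRay

variable {γ t : ℝ}

lemma zero_eq (γ : ℝ) : boundaryRay γ 0 = 0 := by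
  ext i
  fin_cases i <;> simp [boundaryRay]

lemma tendsto_zero (γ : ℝ) : Tendsto (boundaryRay γ) (𝓝 0) (𝓝 0) := by
  have hc : Continuous (boundaryRay γ) := by unfold boundaryRay; fun_prop
  simpa only [zero_eq] using hc.tendsto 0

lemma mem_coneMap (hγ : γ ^ 2 ≤ 1) (ht : 0 ≤ t) : !₂[γ * t, 0] ∈ coneMap γ (boundaryRay γ t) := by
  have hsq : (√(1 - γ ^ 2) * t) ^ 2 = (1 - γ ^ 2) * t ^ 2 := by
    rw [mul_pow, Real.sq_sqrt (by linarith)]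
  refine ⟨?_, ?_, rfl, ?_⟩ <;>
    simp only [boundaryRay, PiLp.toLp_apply, Matrix.cons_val_zero, Matrix.cons_val_one]
  · exact hsq.le
  · positivity
  · simp [hsq]

lemma one_sub_mul_sq_lt_sq (hγ0 : 0 < γ) (hγ1 : γ < 1) (ht : t ≠ 0) :
    (1 - γ) * boundaryRay γ t 0 ^ 2 < boundaryRay γ t 1 ^ 2 := by
  simp only [boundaryRay, PiLp.toLp_apply, Matrix.cons_val_zero, Matrix.cons_val_one]
  rw [mul_pow, Real.sq_sqrt (by nlinarith)]
  have : 0 < t ^ 2 := by positivity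
  nlinarith [mul_pos (mul_pos hγ0 (sub_pos.mpr hγ1)) this]

end boundaryRay

/-- Example 5.5: a map that is `(Ξ, I, I)`-partially strongly submonotone with
`Ξ = diag(γ, 0)` at the origin but not `(Ξ, I, I)`-partially subregular there. -/
theorem partial_submonotone_without_partial_subregular
    (γ : ℝ) (hγ0 : 0 < γ) (hγ1 : γ < 1)
    (T : EuclideanSpace ℝ (Fin 2) → Set (EuclideanSpace ℝ (Fin 2)))
    (hT : ∀ u, T u = {w | (u 1)^2 ≤ (1 - γ^2) * (u 0)^2 ∧ 0 ≤ u 1 ∧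
      w 0 = γ * u 0 ∧ w 1 = Real.sqrt ((1 - γ^2) * (u 0)^2 - (u 1)^2)}) :
    ({v | (0 : EuclideanSpace ℝ (Fin 2)) ∈ T v} = {0})
    ∧ (∀ u, ∀ w ∈ T u, ⟪w, u⟫ + ((1 - γ) * (u 0)^2 + (u 1)^2) ≥ ‖u‖^2)
    ∧ (∀ 𝒰 ∈ nhds (0 : EuclideanSpace ℝ (Fin 2)), ∃ u ∈ 𝒰, ∃ w ∈ T u,
        ‖w‖^2 + ((1 - γ) * (u 0)^2 + (u 1)^2) < ‖u‖^2) := by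
  obtain rfl : T = coneMap γ := funext hT
  refine ⟨Set.ext fun v => coneMap.zero_mem_iff hγ0.ne', fun u w hw =>
    coneMap.partial_strong_submonotone hw, fun 𝒰 h𝒰 => ?_⟩
  have hray : ∀ᶠ t in 𝓝[>] (0 : ℝ), boundaryRay γ t ∈ 𝒰 ∧ 0 < t :=
    ((boundaryRay.tendsto_zero γ).mono_left nhdsWithin_le_nhds |>.eventually h𝒰).and self_mem_nhdsWithin
  obtain ⟨t, ht𝒰, ht⟩ := hray.exists
  have hw := boundaryRay.mem_coneMap (by nlinarith) ht.le
  exact ⟨_, ht𝒰, _, hw, coneMap.not_partial_subregular_of_lt hw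
    (boundaryRay.one_sub_mul_sq_lt_sq hγ0 hγ1 ht.ne')⟩
end

section
/- Let G = δ_{B̄(0,α)} be the indicator function of the closed ball of radius α > 0 in a Hilbert space, and let (x*, q*) ∈ graph ∂G with q* ≠ 0. Then x* is the unique point of (∂G)⁻¹(q*), ‖x*‖ = α, q* = βx* for some β > 0, and for γ := ‖q*‖/(2α), the subdifferential ∂G is (I, γI)-strongly submonotone at (x*, q*) on the whole domain: ⟨q - q*, x - x*⟩ ≥ γ‖x - x*‖² for all x with ‖x‖ ≤ α and all q ∈ ∂G(x) = N_{B̄(0,α)}(x). -/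
/-!
A nonzero normal `q*` to the ball at `x*` satisfies `α‖q*‖ ≤ ⟪q*, x*⟫ ≤ ‖q*‖‖x*‖ ≤ α‖q*‖`, so
Cauchy–Schwarz is an equality: `‖x*‖ = α` and `q* = β x*` with `β = ‖q*‖/α`. Then
`⟪q - q*, x - x*⟫ = ⟪q, x - x*⟫ + β⟪x*, x* - x⟫`, where the first term is nonnegative by
normality of `q` at `x` tested against `x*`, and `2⟪x*, x* - x⟫ ≥ ‖x - x*‖²` because `‖x‖ ≤ ‖x*‖`.
-/

open scoped RealInnerProductSpace

section

variable {X : Type*} [NormedAddCommGroup X] [InnerProductSpace ℝ X]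

theorem norm_sub_sq_le_two_mul_inner_sub {x y : X} (h : ‖x‖ ≤ ‖y‖) :
    ‖x - y‖ ^ 2 ≤ 2 * ⟪y, y - x⟫ := by
  have hsq : ‖x‖ ^ 2 ≤ ‖y‖ ^ 2 := pow_le_pow_left₀ (norm_nonneg x) h 2
  rw [norm_sub_sq_real, inner_sub_right, real_inner_self_eq_norm_sq, real_inner_comm]
  linarith

theorem half_mul_norm_sub_sq_le_inner_sub_smul {β : ℝ} (hβ : 0 ≤ β) {x xs q : X}
    (hx : ‖x‖ ≤ ‖xs‖) (hq : 0 ≤ ⟪q, x - xs⟫) :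
    β / 2 * ‖x - xs‖ ^ 2 ≤ ⟪q - β • xs, x - xs⟫ :=
  calc β / 2 * ‖x - xs‖ ^ 2 ≤ β / 2 * (2 * ⟪xs, xs - x⟫) := by
        gcongr; exact norm_sub_sq_le_two_mul_inner_sub hx
    _ ≤ ⟪q, x - xs⟫ + β * ⟪xs, xs - x⟫ := by linarith
    _ = ⟪q - β • xs, x - xs⟫ := by
        rw [inner_sub_left, real_inner_smul_left, ← neg_sub xs x, inner_neg_right,
          inner_neg_right]
        ring

/-- The normal-cone inequality of the ball `‖y‖ ≤ α` at `x`; membership `‖x‖ ≤ α` is kept apart. -/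
def IsNormalToBall (α : ℝ) (x q : X) : Prop :=
  ∀ y : X, ‖y‖ ≤ α → ⟪q, y - x⟫ ≤ 0

namespace IsNormalToBall

variable {α : ℝ} {x q : X}

theorem mul_norm_le_inner (hα : 0 ≤ α) (h : IsNormalToBall α x q) : α * ‖q‖ ≤ ⟪q, x⟫ := by
  rcases eq_or_ne q 0 with rfl | hq
  · simp
  have hq' : 0 < ‖q‖ := norm_pos_iff.2 hq
  -- test against the point of the sphere in the direction of `q`
  have hy : ‖(α / ‖q‖) • q‖ ≤ α := by
    rw [norm_smul, Real.norm_of_nonneg (by positivity), div_mul_cancel₀ _ hq'.ne']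
  have := h _ hy
  rw [inner_sub_right, real_inner_smul_right, real_inner_self_eq_norm_sq] at this
  have hsq : α / ‖q‖ * ‖q‖ ^ 2 = α * ‖q‖ := by field_simp
  linarith

theorem norm_eq_and_eq_smul (hα : 0 < α) (hx : ‖x‖ ≤ α) (hq : q ≠ 0)
    (h : IsNormalToBall α x q) : ‖x‖ = α ∧ q = (‖q‖ / α) • x := by
  have hq' : 0 < ‖q‖ := norm_pos_iff.2 hq
  have hlow := h.mul_norm_le_inner hα.le
  have hcs := real_inner_le_norm q x
  have hxα : ‖x‖ = α := le_antisymm hx (le_of_mul_le_mul_left (by linarith) hq')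
  have hpar : ‖x‖ • q = ‖q‖ • x := inner_eq_norm_mul_iff_real.1 (by nlinarith)
  refine ⟨hxα, ?_⟩
  rw [hxα] at hpar
  rw [div_eq_inv_mul, mul_smul, ← hpar, smul_smul, inv_mul_cancel₀ hα.ne', one_smul]

end IsNormalToBall

end

/-- Lemma 5.1: the subdifferential (normal cone) of the indicator of the closed
ball `B̄(0,α)` is `(I, γI)`-strongly submonotone at `(x*, q*)` with
`γ = ‖q*‖/(2α)` whenever `q* ≠ 0`. -/
theorem ball_indicator_strongly_submonotone
    {X : Type*} [NormedAddCommGroup X] [InnerProductSpace ℝ X]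
    (α : ℝ) (hα : 0 < α)
    (NC : X → Set X)
    (hNC : ∀ x, NC x = {q | ‖x‖ ≤ α ∧ ∀ y : X, ‖y‖ ≤ α → ⟪q, y - x⟫ ≤ 0})
    (xs qs : X) (hqs : qs ∈ NC xs) (hqs0 : qs ≠ 0) :
    (∀ x, qs ∈ NC x → x = xs)
    ∧ ‖xs‖ = α
    ∧ (∃ β : ℝ, 0 < β ∧ qs = β • xs)
    ∧ (∀ x : X, ‖x‖ ≤ α → ∀ q ∈ NC x,
        ⟪q - qs, x - xs⟫ ≥ (‖qs‖ / (2 * α)) * ‖x - xs‖^2) := by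
  have hmem : ∀ x q, q ∈ NC x ↔ ‖x‖ ≤ α ∧ IsNormalToBall α x q := fun x q => by
    rw [hNC]; rfl
  obtain ⟨hxs, hnormal⟩ := (hmem xs qs).1 hqs
  obtain ⟨hxsα, hqs_eq⟩ := hnormal.norm_eq_and_eq_smul hα hxs hqs0
  have hβ : 0 < ‖qs‖ / α := div_pos (norm_pos_iff.2 hqs0) hα
  refine ⟨fun x hx => ?_, hxsα, ⟨_, hβ, hqs_eq⟩, fun x hx q hq => ?_⟩
  · obtain ⟨hxα, hnormal_x⟩ := (hmem x qs).1 hx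
    exact smul_right_injective X hβ.ne'
      ((hnormal_x.norm_eq_and_eq_smul hα hxα hqs0).2.symm.trans hqs_eq)
  · have hq_mono : 0 ≤ ⟪q, x - xs⟫ := by
      rw [← neg_sub, inner_neg_right, neg_nonneg]
      exact ((hmem x q).1 hq).2 xs hxsα.le
    have key := half_mul_norm_sub_sq_le_inner_sub_smul hβ.le (hxsα ▸ hx) hq_mono
    rw [← hqs_eq] at key
    rw [ge_iff_le, div_mul_eq_div_div_swap]
    exact key
end

section
/- On ℝ², let H(u) := ∂(u ↦ u₁u₂ + δ_{[0,∞)²}(u)) (Clarke subdifferential), i.e., H(u₁,u₂) = (u₂, u₁) + N_{[0,∞)²}(u₁,u₂) for u ∈ [0,∞)², ∅ otherwise. Let τ = 1/2 and consider the proximal point iteration 0 ∈ H(u^{i+1}) + τ⁻¹(u^{i+1} - uⁱ) with u⁰ ∈ [0,∞)². Then either the iteration reaches a zero of H in finitely many steps, or there is a constant C such that dist²(u^N, H⁻¹(0)) ≤ C (4/5)^N dist²(u⁰, H⁻¹(0)) for all N, i.e., the iterates converge linearly to H⁻¹(0) = {0} ∪ (boundary zeros). -/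
noncomputable def mk2 (a b : ℝ) : EuclideanSpace ℝ (Fin 2) :=
  (WithLp.equiv 2 (Fin 2 → ℝ)).symm ![a, b]

@[simp] lemma mk2_zero (a b : ℝ) : mk2 a b 0 = a := rfl
@[simp] lemma mk2_one (a b : ℝ) : mk2 a b 1 = b := rfl

lemma coord_le_dist (x y : EuclideanSpace ℝ (Fin 2)) (i : Fin 2) :
    |x i - y i| ≤ dist x y := by
  rw [EuclideanSpace.dist_eq]
  simp_rw [Real.dist_eq, sq_abs]
  rw [show |x i - y i| = Real.sqrt ((x i - y i) ^ 2) by rw [Real.sqrt_sq_eq_abs]]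
  apply Real.sqrt_le_sqrt
  exact Finset.single_le_sum (f := fun j => (x j - y j) ^ 2)
    (fun j _ => sq_nonneg _) (Finset.mem_univ i)

lemma dist_mk2 (x : EuclideanSpace ℝ (Fin 2)) (a b : ℝ) :
    dist x (mk2 a b) = Real.sqrt ((x 0 - a)^2 + (x 1 - b)^2) := by
  rw [EuclideanSpace.dist_eq, Fin.sum_univ_two]
  simp [Real.dist_eq, sq_abs]

/-- Example 5.8: linear convergence of the basic proximal point method for
`H = ∂(u ↦ u₁u₂ + δ_{[0,∞)²}(u))` with step length `τ = 1/2`: either a zero of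
`H` is reached in finitely many steps, or the squared distance to `H⁻¹(0)`
converges linearly with rate `4/5`. -/
theorem prox_point_bilinear_quadrant_linear
    (H : EuclideanSpace ℝ (Fin 2) → Set (EuclideanSpace ℝ (Fin 2)))
    (hH : ∀ u, H u = {w | 0 ≤ u 0 ∧ 0 ≤ u 1 ∧
      ∃ q : EuclideanSpace ℝ (Fin 2),
        (∀ v : EuclideanSpace ℝ (Fin 2), 0 ≤ v 0 → 0 ≤ v 1 →
          q 0 * (v 0 - u 0) + q 1 * (v 1 - u 1) ≤ 0) ∧
        w 0 = u 1 + q 0 ∧ w 1 = u 0 + q 1})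
    (Z : Set (EuclideanSpace ℝ (Fin 2)))
    (hZ : Z = {v | (0 : EuclideanSpace ℝ (Fin 2)) ∈ H v})
    (u : ℕ → EuclideanSpace ℝ (Fin 2)) (hu0 : 0 ≤ u 0 0 ∧ 0 ≤ u 0 1)
    (hiter : ∀ i : ℕ, ∃ w ∈ H (u (i+1)),
      w + ((1/2 : ℝ))⁻¹ • (u (i+1) - u i) = 0) :
    (∃ i : ℕ, (0 : EuclideanSpace ℝ (Fin 2)) ∈ H (u i))
    ∨ ∃ Cst : ℝ, 0 < Cst ∧ ∀ N : ℕ,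
        (Metric.infDist (u N) Z)^2
          ≤ (4/5 : ℝ)^N * (Metric.infDist (u 0) Z)^2 * Cst := by
  by_cases hfin : ∃ i : ℕ, (0 : EuclideanSpace ℝ (Fin 2)) ∈ H (u i)
  · exact Or.inl hfin
  push_neg at hfin
  -- boundary points of the quadrant are zeros of H
  have hzmem : ∀ v : EuclideanSpace ℝ (Fin 2), 0 ≤ v 0 → 0 ≤ v 1 →
      v 0 * v 1 = 0 → (0 : EuclideanSpace ℝ (Fin 2)) ∈ H v := by
    intro v h0 h1 hprod
    rw [hH]
    refine ⟨h0, h1, mk2 (-(v 1)) (-(v 0)), ?_, by simp, by simp⟩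
    intro v' h0' h1'
    simp only [mk2_zero, mk2_one]
    rcases mul_eq_zero.mp hprod with h | h <;> nlinarith
  -- all iterates are strictly inside the quadrant
  have hpos : ∀ i : ℕ, 0 < u i 0 ∧ 0 < u i 1 := by
    intro i
    have hnn : 0 ≤ u i 0 ∧ 0 ≤ u i 1 := by
      cases i with
      | zero => exact hu0
      | succ j =>
        obtain ⟨w, hw, -⟩ := hiter j
        rw [hH] at hw
        exact ⟨hw.1, hw.2.1⟩
    rcases hnn.1.lt_or_eq with h0 | h0
    · rcases hnn.2.lt_or_eq with h1 | h1
      · exact ⟨h0, h1⟩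
      · exact absurd (hzmem _ hnn.1 hnn.2 (by rw [← h1]; ring)) (hfin i)
    · exact absurd (hzmem _ hnn.1 hnn.2 (by rw [← h0]; ring)) (hfin i)
  -- the contraction step
  have key : ∀ i : ℕ,
      min (u (i+1) 0) (u (i+1) 1) ≤ (2/3) * min (u i 0) (u i 1) := by
    intro i
    obtain ⟨w, hw, heq⟩ := hiter i
    rw [hH] at hw
    obtain ⟨h0, h1, q, hq, hw0, hw1⟩ := hw
    have hx := (hpos (i+1)).1
    have hy := (hpos (i+1)).2
    have hq0a := hq (mk2 (2 * u (i+1) 0) (u (i+1) 1)) (by rw [mk2_zero]; positivity) hy.le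
    have hq0b := hq (mk2 0 (u (i+1) 1)) le_rfl hy.le
    simp only [mk2_zero, mk2_one, sub_self, mul_zero, add_zero, zero_sub] at hq0a hq0b
    have hq0 : q 0 = 0 := by nlinarith
    have hq1a := hq (mk2 (u (i+1) 0) (2 * u (i+1) 1)) hx.le (by rw [mk2_one]; positivity)
    have hq1b := hq (mk2 (u (i+1) 0) 0) hx.le le_rfl
    simp only [mk2_zero, mk2_one, sub_self, mul_zero, zero_add, zero_sub] at hq1a hq1b
    have hq1 : q 1 = 0 := by nlinarith
    have e0 := congrArg (fun f : EuclideanSpace ℝ (Fin 2) => f 0) heq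
    have e1 := congrArg (fun f : EuclideanSpace ℝ (Fin 2) => f 1) heq
    simp only [PiLp.add_apply, PiLp.smul_apply, PiLp.sub_apply, PiLp.zero_apply,
      smul_eq_mul] at e0 e1
    rw [hw0, hq0] at e0
    rw [hw1, hq1] at e1
    have ha := (hpos i).1
    have hb := (hpos i).2
    rcases le_total (u i 0) (u i 1) with h | h
    · rw [min_eq_left h]
      refine le_trans (min_le_left _ _) ?_
      nlinarith
    · rw [min_eq_right h]
      refine le_trans (min_le_right _ _) ?_
      nlinarith
  -- the distance to Z is the min coordinate
  have hdist : ∀ i : ℕ, Metric.infDist (u i) Z = min (u i 0) (u i 1) := by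
    intro i
    have ha := (hpos i).1
    have hb := (hpos i).2
    have hZne : Z.Nonempty := by
      refine ⟨0, ?_⟩
      rw [hZ]
      exact hzmem 0 le_rfl le_rfl (by simp)
    apply le_antisymm
    · rcases le_total (u i 0) (u i 1) with h | h
      · rw [min_eq_left h]
        have hz : mk2 0 (u i 1) ∈ Z := by
          rw [hZ]; exact hzmem _ le_rfl hb.le (by simp)
        calc Metric.infDist (u i) Z ≤ dist (u i) (mk2 0 (u i 1)) :=
              Metric.infDist_le_dist_of_mem hz
          _ = u i 0 := by
              rw [dist_mk2]
              simp [Real.sqrt_sq ha.le]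
      · rw [min_eq_right h]
        have hz : mk2 (u i 0) 0 ∈ Z := by
          rw [hZ]; exact hzmem _ ha.le le_rfl (by simp)
        calc Metric.infDist (u i) Z ≤ dist (u i) (mk2 (u i 0) 0) :=
              Metric.infDist_le_dist_of_mem hz
          _ = u i 1 := by
              rw [dist_mk2]
              simp [Real.sqrt_sq hb.le]
    · rw [Metric.infDist_eq_iInf]
      have : Nonempty Z := hZne.to_subtype
      apply le_ciInf
      rintro ⟨y, hy⟩
      rw [hZ] at hy
      simp only [Set.mem_setOf_eq] at hy
      rw [hH] at hy
      show u i 0 ⊓ u i 1 ≤ dist (u i) y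
      obtain ⟨hy0, hy1, q, hq, hw0, hw1⟩ := hy
      simp only [show (0 : EuclideanSpace ℝ (Fin 2)) 0 = 0 from rfl,
        show (0 : EuclideanSpace ℝ (Fin 2)) 1 = 0 from rfl] at hw0 hw1
      have hq0 : q 0 = -(y 1) := by linarith
      have hq1 : q 1 = -(y 0) := by linarith
      have := hq (mk2 0 (y 1)) le_rfl hy1
      simp only [mk2_zero, mk2_one, sub_self, mul_zero, add_zero, zero_sub,
        hq0] at this
      have hprod : y 0 * y 1 = 0 := le_antisymm (by nlinarith) (by positivity)
      rcases mul_eq_zero.mp hprod with h | h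
      · have := coord_le_dist (u i) y 0
        rw [h, sub_zero, abs_of_nonneg ha.le] at this
        exact le_trans (min_le_left _ _) this
      · have := coord_le_dist (u i) y 1
        rw [h, sub_zero, abs_of_nonneg hb.le] at this
        exact le_trans (min_le_right _ _) this
  -- conclude
  right
  refine ⟨1, one_pos, fun N => ?_⟩
  simp only [hdist, mul_one]
  induction N with
  | zero => simp
  | succ N ih =>
    have h1 := key N
    have h2 : 0 ≤ min (u N 0) (u N 1) := le_min (hpos N).1.le (hpos N).2.le
    have h3 : 0 ≤ min (u (N+1) 0) (u (N+1) 1) :=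
      le_min (hpos (N+1)).1.le (hpos (N+1)).2.le
    have h4 : min (u (N+1) 0) (u (N+1) 1) ^ 2 ≤
        (4/5) * min (u N 0) (u N 1) ^ 2 := by nlinarith
    calc min (u (N+1) 0) (u (N+1) 1) ^ 2
        ≤ (4/5) * min (u N 0) (u N 1) ^ 2 := h4
      _ ≤ (4/5) * ((4/5 : ℝ)^N * min (u 0 0) (u 0 1) ^ 2) := by linarith
      _ = (4/5 : ℝ)^(N+1) * min (u 0 0) (u 0 1) ^ 2 := by ring
end

section
/- Let G(x) = Σₖ |xₖ| on ℝⁿ (the ℓ¹-norm) and let q* ∈ ∂G(x*) satisfy the strict complementarity condition |q*ₖ| < 1 for all k = 1,…,n. Then x* = 0, (∂G)⁻¹ restricted appropriately is a singleton {0} in each coordinate, and there exist γ > 0 and a neighbourhood 𝒰 of 0 such that ⟨q - q*, x⟩ ≥ γ‖x‖² for all x ∈ 𝒰 and q ∈ ∂G(x). In particular, ∂‖·‖₁ is (I, γI)-strongly submonotone at (0, q*). -/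
/-!
Strict complementarity `|q*ₖ| < 1` forces every coordinate of `x*` to vanish, since a nonzero
coordinate would pin `q*ₖ = ±1`. For the growth estimate one argues coordinatewise: if
`|xₖ| ≤ 1 - |q*ₖ|` and `xₖ ≠ 0`, then `qₖ = sign xₖ` and `(qₖ - q*ₖ) xₖ = |xₖ| - q*ₖ xₖ ≥ xₖ²`.
Summing over `k` gives `⟪q - q*, x⟫ ≥ ‖x‖²` on the box `∏ₖ [-(1 - |q*ₖ|), 1 - |q*ₖ|]`, which is a
neighbourhood of `0` because every side length is positive.
-/

open scoped RealInnerProductSpace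

/-- The subdifferential `∂|·|(t)` of the absolute value on `ℝ`. -/
def absSubdiff (t : ℝ) : Set ℝ :=
  {s | (0 < t → s = 1) ∧ (t < 0 → s = -1) ∧ (t = 0 → |s| ≤ 1)}

lemma eq_zero_of_mem_absSubdiff {s t : ℝ} (hs : s ∈ absSubdiff t) (hs1 : |s| < 1) : t = 0 := by
  obtain ⟨hpos, hneg, -⟩ := hs
  rcases lt_trichotomy t 0 with ht | ht | ht
  · simp [hneg ht] at hs1
  · exact ht
  · simp [hpos ht] at hs1

lemma sq_le_sub_mul_of_mem_absSubdiff {s s' t : ℝ} (hs : s ∈ absSubdiff t)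
    (ht : |t| ≤ 1 - |s'|) : t ^ 2 ≤ (s - s') * t := by
  obtain ⟨hpos, hneg, -⟩ := hs
  rcases lt_trichotomy t 0 with h | rfl | h
  · rw [hneg h]; rw [abs_of_neg h] at ht
    nlinarith [le_abs_self s', neg_abs_le s']
  · simp
  · rw [hpos h]; rw [abs_of_pos h] at ht
    nlinarith [le_abs_self s', neg_abs_le s']

section EuclideanSpace

variable {ι : Type*} [Fintype ι]

lemma EuclideanSpace.setOf_forall_abs_apply_le_mem_nhds_zero {r : ι → ℝ} (hr : ∀ k, 0 < r k) :
    {x : EuclideanSpace ℝ ι | ∀ k, |x k| ≤ r k} ∈ nhds 0 :=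
  Filter.eventually_all.2 fun k =>
    ((PiLp.continuous_apply 2 _ k).abs.tendsto' 0 0 (by simp)).eventually (eventually_le_nhds (hr k))

lemma EuclideanSpace.norm_sq_le_inner_of_forall {x y : EuclideanSpace ℝ ι}
    (h : ∀ k, x k ^ 2 ≤ y k * x k) : ‖x‖ ^ 2 ≤ ⟪y, x⟫ := by
  rw [EuclideanSpace.real_norm_sq_eq, PiLp.inner_apply]
  exact Finset.sum_le_sum fun k _ => by simpa [mul_comm] using h k

end EuclideanSpace

/-- Strict complementarity for the ℓ¹-norm subdifferential: if `q* ∈ ∂‖·‖₁(x*)`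
with `|q*ₖ| < 1` for all `k`, then `x* = 0`, `(∂‖·‖₁)⁻¹(q*) = {0}`, and `∂‖·‖₁`
is `(I, γI)`-strongly submonotone at `(0, q*)` for some `γ > 0`. -/
theorem l1_strict_complementarity_strongly_submonotone
    (n : ℕ)
    (Sd : EuclideanSpace ℝ (Fin n) → Set (EuclideanSpace ℝ (Fin n)))
    (hSd : ∀ x, Sd x = {q | ∀ k : Fin n,
      (0 < x k → q k = 1) ∧ (x k < 0 → q k = -1) ∧ (x k = 0 → |q k| ≤ 1)})
    (xs qs : EuclideanSpace ℝ (Fin n)) (hqs : qs ∈ Sd xs)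
    (hstrict : ∀ k : Fin n, |qs k| < 1) :
    xs = 0
    ∧ {x : EuclideanSpace ℝ (Fin n) | qs ∈ Sd x} = {0}
    ∧ ∃ γ : ℝ, 0 < γ ∧ ∃ 𝒰 ∈ nhds (0 : EuclideanSpace ℝ (Fin n)),
        ∀ x ∈ 𝒰, ∀ q ∈ Sd x, ⟪q - qs, x⟫ ≥ γ * ‖x‖^2 := by
  have mem_Sd_iff : ∀ x q, q ∈ Sd x ↔ ∀ k, q k ∈ absSubdiff (x k) := fun x q => by
    rw [hSd]; rfl
  have hzero : ∀ x, qs ∈ Sd x → x = 0 := fun x hx =>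
    PiLp.ext fun k => eq_zero_of_mem_absSubdiff ((mem_Sd_iff x qs).1 hx k) (hstrict k)
  have hxs : xs = 0 := hzero xs hqs
  refine ⟨hxs, Set.eq_singleton_iff_unique_mem.2 ⟨hxs ▸ hqs, hzero⟩, 1, one_pos, _,
    EuclideanSpace.setOf_forall_abs_apply_le_mem_nhds_zero fun k => sub_pos.2 (hstrict k), ?_⟩
  intro x hx q hq
  rw [one_mul, ge_iff_le]
  exact EuclideanSpace.norm_sq_le_inner_of_forall fun k =>
    sq_le_sub_mul_of_mem_absSubdiff ((mem_Sd_iff x q).1 hq k) (hx k)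
end
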